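/- A tree rooted at infinity admits a doubling flow measure if and only if it has uniformly bounded degree (there exists q such that q(x) ≤ q for all x ∈ V) and sup_{γ ∈ Γ} n(γ) < ∞. -/

import Mathlib

open scoped ENNReal NNReal BigOperators

universe u

namespace FlowPaper

/-- A tree rooted at infinity: vertex set `V`, level function `lvl`, predecessor `pred`. -/
structure Tree (V : Type u) where
  lvl : V → ℤ
  pred : V → V
  lvl_pred : ∀ x, lvl (pred x) = lvl x + 1
  sons_fin : ∀ x, {y : V | pred y = x}.Finite
  sons_ne : ∀ x, ∃ y, pred y = x
  conn : ∀ x y, ∃ k l : ℕ, pred^[k] x = pred^[l] y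

variable {V : Type u}

namespace Tree

/-- The (finite) set of sons of a vertex. -/
noncomputable def sons (T : Tree V) (x : V) : Finset V := (T.sons_fin x).toFinset

/-- The number of sons `q(x)` of a vertex. -/
noncomputable def deg (T : Tree V) (x : V) : ℕ := (T.sons x).card

/-- The partial order: `x ≤ y` iff `y` is an iterated predecessor of `x`. -/
def Le (T : Tree V) (x y : V) : Prop := ∃ k : ℕ, T.pred^[k] x = y

/-- The geodesic distance: the least `k + l` with `p^[k] x = p^[l] y`. -/
noncomputable def dist (T : Tree V) (x y : V) : ℕ :=
  sInf {n : ℕ | ∃ k l : ℕ, k + l = n ∧ T.pred^[k] x = T.pred^[l] y}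

/-- The closed ball of radius `r` about `x`. -/
def ball (T : Tree V) (x : V) (r : ℕ) : Set V := {y | T.dist x y ≤ r}

/-- The sphere of radius `r` about `x`. -/
def sphere (T : Tree V) (x : V) (r : ℕ) : Set V := {y | T.dist x y = r}

/-- Adjacency: `x ~ y` iff one is the predecessor of the other. -/
def Adj (T : Tree V) (x y : V) : Prop := T.pred x = y ∨ T.pred y = x

/-- The trapezoid `R_{h1}^{h2}(x0)`. -/
def trap (T : Tree V) (x0 : V) (h1 h2 : ℕ) : Set V :=
  {x | T.Le x x0 ∧ T.lvl x0 - h2 < T.lvl x ∧ T.lvl x ≤ T.lvl x0 - h1}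

end Tree

/-- The measure of a subset of vertices. -/
noncomputable def mst (m : V → ℝ≥0∞) (A : Set V) : ℝ≥0∞ := ∑' x : A, m x

/-- `m` is a flow measure: positive, finite at each vertex, and the value at a
vertex is the sum of the values at its sons. -/
structure IsFlow (T : Tree V) (m : V → ℝ≥0∞) : Prop where
  pos : ∀ x, 0 < m x
  fin : ∀ x, m x < ⊤
  flow : ∀ x, m x = ∑ y ∈ T.sons x, m y

/-- `m` is locally doubling. -/
def LocDoubling (T : Tree V) (m : V → ℝ≥0∞) : Prop :=
  ∀ r : ℕ, 0 < r → ∃ C : ℝ, 1 < C ∧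
    ∀ x : V, mst m (T.ball x (2 * r)) ≤ ENNReal.ofReal C * mst m (T.ball x r)

/-- `m` is (globally) doubling. -/
def Doubling (T : Tree V) (m : V → ℝ≥0∞) : Prop :=
  ∃ C : ℝ, 1 < C ∧ ∀ (r : ℕ) (x : V), 0 < r →
    mst m (T.ball x (2 * r)) ≤ ENNReal.ofReal C * mst m (T.ball x r)

/-- Admissible trapezoid (with respect to the parameter `β`): a singleton, or a
trapezoid `R_{h1}^{h2}(x)` with `2 ≤ h2 / h1 ≤ β`. -/
def IsAdmissible (T : Tree V) (β : ℝ) (R : Set V) : Prop :=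
  (∃ x : V, R = {x}) ∨
  ∃ (x : V) (h1 h2 : ℕ), 1 ≤ h1 ∧ 2 * h1 ≤ h2 ∧ (h2 : ℝ) ≤ β * h1 ∧ R = T.trap x h1 h2

/-- `∫_A |f| dm`. -/
noncomputable def intNN (m : V → ℝ≥0∞) (A : Set V) (f : V → ℂ) : ℝ≥0∞ :=
  ∑' x : A, (‖f x‖₊ : ℝ≥0∞) * m x

/-- `∫_A f dm`. -/
noncomputable def intC (m : V → ℝ≥0∞) (A : Set V) (f : V → ℂ) : ℂ :=
  ∑' x : A, f x * ((m x).toReal : ℂ)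

/-- The average `f_A = (1/m(A)) ∫_A f dm`. -/
noncomputable def avg (m : V → ℝ≥0∞) (A : Set V) (f : V → ℂ) : ℂ :=
  intC m A f / (((mst m A).toReal : ℝ) : ℂ)

/-- `L^p` norm of an `ℝ≥0∞`-valued function, `0 < p < ∞`. -/
noncomputable def lpNormE (m : V → ℝ≥0∞) (p : ℝ) (g : V → ℝ≥0∞) : ℝ≥0∞ :=
  (∑' x : V, g x ^ p * m x) ^ (1 / p)

/-- `L^p` norm, `0 < p < ∞`. -/
noncomputable def lpNorm (m : V → ℝ≥0∞) (p : ℝ) (f : V → ℂ) : ℝ≥0∞ :=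
  lpNormE m p (fun x => (‖f x‖₊ : ℝ≥0∞))

/-- `L^∞` norm. -/
noncomputable def linfNorm (f : V → ℂ) : ℝ≥0∞ := ⨆ x : V, (‖f x‖₊ : ℝ≥0∞)

/-- The Hardy–Littlewood maximal function associated with admissible trapezoids. -/
noncomputable def maximal (T : Tree V) (β : ℝ) (m : V → ℝ≥0∞) (f : V → ℂ) (x : V) : ℝ≥0∞ :=
  ⨆ (R : Set V) (_ : IsAdmissible T β R ∧ x ∈ R), (mst m R)⁻¹ * intNN m R f

/-- The `BMO_q` seminorm. -/
noncomputable def oscNorm (T : Tree V) (β : ℝ) (m : V → ℝ≥0∞) (q : ℝ) (f : V → ℂ) : ℝ≥0∞ :=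
  ⨆ (R : Set V) (_ : IsAdmissible T β R),
    ((mst m R)⁻¹ * ∑' x : R, (‖f x - avg m R f‖₊ : ℝ≥0∞) ^ q * m x) ^ (1 / q)

/-- The sharp maximal function. -/
noncomputable def sharpMaximal (T : Tree V) (β : ℝ) (m : V → ℝ≥0∞) (f : V → ℂ) (x : V) :
    ℝ≥0∞ :=
  ⨆ (R : Set V) (_ : IsAdmissible T β R ∧ x ∈ R),
    (mst m R)⁻¹ * ∑' y : R, (‖f y - avg m R f‖₊ : ℝ≥0∞) * m y

/-- A `(1,p)`-atom, `1 < p < ∞`. -/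
def IsAtomP (T : Tree V) (β : ℝ) (m : V → ℝ≥0∞) (p : ℝ) (a : V → ℂ) : Prop :=
  ∃ R : Set V, IsAdmissible T β R ∧ (∀ x ∉ R, a x = 0) ∧
    lpNorm m p a ≤ (mst m R) ^ (1 / p - 1) ∧ intC m R a = 0

/-- A `(1,∞)`-atom. -/
def IsAtomInf (T : Tree V) (β : ℝ) (m : V → ℝ≥0∞) (a : V → ℂ) : Prop :=
  ∃ R : Set V, IsAdmissible T β R ∧ (∀ x ∉ R, a x = 0) ∧
    linfNorm a ≤ (mst m R)⁻¹ ∧ intC m R a = 0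

/-- An atomic decomposition `f = Σ_j λ_j a_j` converging in `L¹(m)`. -/
def IsDecomp (m : V → ℝ≥0∞) (atom : (V → ℂ) → Prop) (f : V → ℂ)
    (lam : ℕ → ℂ) (a : ℕ → V → ℂ) : Prop :=
  (∀ j, atom (a j)) ∧ Summable (fun j => ‖lam j‖) ∧
  Filter.Tendsto
    (fun N => lpNorm m 1 (fun x => f x - ∑ j ∈ Finset.range N, lam j * a j x))
    Filter.atTop (nhds (0 : ℝ≥0∞))

/-- The atomic Hardy norm associated with the given class of atoms. -/
noncomputable def hNorm (m : V → ℝ≥0∞) (atom : (V → ℂ) → Prop) (f : V → ℂ) : ℝ≥0∞ :=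
  ⨅ (d : {la : (ℕ → ℂ) × (ℕ → V → ℂ) // IsDecomp m atom f la.1 la.2}),
    ENNReal.ofReal (∑' j, ‖d.1.1 j‖)

/-- A (finite) geodesic: pairwise distinct vertices, consecutive ones adjacent. -/
def IsGeodesic (T : Tree V) (l : List V) : Prop := l.Nodup ∧ l.Chain' T.Adj

/-- The number of vertices with at least two sons along a geodesic. -/
noncomputable def branchCount (T : Tree V) (l : List V) : ℕ :=
  List.countP (fun y => decide (2 ≤ T.deg y)) l

/-- The lower half-ball `B_r^-(x0)`. -/
def lowerBall (T : Tree V) (x0 : V) (r : ℕ) : Set V := {x | T.Le x x0 ∧ T.dist x x0 ≤ r}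

/-- The boundary `∂A` of a set of vertices. -/
def bdry (T : Tree V) (A : Set V) : Set V := {x ∈ A | ∃ y ∉ A, T.Adj y x}

/-- Trapezoids as labelled data: a singleton, or the data `(x, h1, h2)`. -/
inductive TrapZ (V : Type u) where
  | single (x : V)
  | tz (x : V) (h1 h2 : ℕ)

namespace TrapZ

/-- The vertex set of a labelled trapezoid. -/
def toSet (T : Tree V) : TrapZ V → Set V
  | single x => {x}
  | tz x h1 h2 => T.trap x h1 h2

/-- Admissibility of a labelled trapezoid. -/
def Adm (β : ℝ) : TrapZ V → Prop
  | single _ => True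
  | tz _ h1 h2 => 1 ≤ h1 ∧ 2 * h1 ≤ h2 ∧ (h2 : ℝ) ≤ β * h1

/-- The root of a labelled trapezoid. -/
def root : TrapZ V → V
  | single x => x
  | tz x _ _ => x

end TrapZ

/-- One step of the decomposition algorithm: the family `ℱ(R,1)`. -/
def children (T : Tree V) : TrapZ V → Set (TrapZ V)
  | .single x => {.single x}
  | .tz x h1 h2 =>
    if h1 = 1 ∧ h2 = 2 then {Q | ∃ y ∈ T.sons x, Q = .single y}
    else if (h1 = 1 ∧ h2 = 3) ∨ 4 * h1 ≤ h2 then {.tz x h1 (2 * h1), .tz x (2 * h1) h2}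
    else {Q | ∃ y ∈ T.sons x, Q = .tz y (h1 - 1) (h2 - 1)}

/-- `R'` is an output of the expansion algorithm applied to `R`. -/
def IsExpansion (T : Tree V) : TrapZ V → TrapZ V → Prop
  | .single x, R' => R' = .tz (T.pred x) 1 2
  | .tz x h1 h2, R' =>
    if h1 = 1 ∧ h2 = 2 then R' = .tz (T.pred x) 1 3
    else if 3 * h1 ≤ h2 then R' = .tz (T.pred x) (h1 + 1) (h2 + 1)
    else R' = .tz x h1 (2 * h2) ∨ R' = .tz x (h1 / 2) h2

/-- The dyadic maximal function associated with a family `D` of partitions. -/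
noncomputable def dyadicMaximal (m : V → ℝ≥0∞) (D : ℤ → Set (Set V)) (f : V → ℂ) (x : V) :
    ℝ≥0∞ :=
  ⨆ (R : Set V) (_ : (∃ j, R ∈ D j) ∧ x ∈ R), (mst m R)⁻¹ * intNN m R f

/-- A dyadic family of partitions of `V` into admissible trapezoids. -/
def IsDyadicFamily (T : Tree V) (β : ℝ) (m : V → ℝ≥0∞) (c Ct : ℝ)
    (D : ℤ → Set (Set V)) : Prop :=
  (∀ j, (∀ R ∈ D j, IsAdmissible T β R) ∧ (D j).Pairwise Disjoint ∧ ⋃₀ (D j) = Set.univ) ∧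
  (∀ j k : ℤ, j < k → ∀ R ∈ D j, ∀ R' ∈ D k, R ⊆ R' ∨ R ∩ R' = ∅) ∧
  (∀ j, ∀ R ∈ D j, ∃! R', R' ∈ D (j + 1) ∧ R ⊆ R') ∧
  (∀ j, ∀ R ∈ D j, ∀ R' ∈ D (j + 1), R ⊆ R' → mst m R' ≤ ENNReal.ofReal Ct * mst m R) ∧
  (∀ j, ∀ R ∈ D j, ∃ F : Finset (Set V), ↑F ⊆ D (j - 1) ∧ (F.card : ℝ) ≤ c ∧ R = ⋃₀ ↑F) ∧
  (∀ x : V, ∃ k : ℤ, ∀ j ≤ k, {x} ∈ D j)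

end FlowPaper

namespace FlowPaper

set_option linter.unusedSectionVars false
variable {V : Type u}

section Basics

variable (T : Tree V)

lemma lvl_iter (x : V) (k : ℕ) : T.lvl (T.pred^[k] x) = T.lvl x + k := by
  induction k with
  | zero => simp
  | succ n ih =>
    rw [Function.iterate_succ_apply', T.lvl_pred, ih]
    push_cast; ring

lemma iter_inj {x : V} {k l : ℕ} (h : T.pred^[k] x = T.pred^[l] x) : k = l := by
  have := congrArg T.lvl h
  rw [lvl_iter, lvl_iter] at this
  exact_mod_cast (add_right_injective _ this)

lemma mem_sons {x y : V} : y ∈ T.sons x ↔ T.pred y = x := by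
  simp [Tree.sons]

lemma deg_pos (x : V) : 0 < T.deg x := by
  obtain ⟨y, hy⟩ := T.sons_ne x
  exact Finset.card_pos.2 ⟨y, (mem_sons T).2 hy⟩

lemma exists_desc (t : ℕ) (x : V) : ∃ u, T.pred^[t] u = x := by
  induction t with
  | zero => exact ⟨x, rfl⟩
  | succ n ih =>
    obtain ⟨u, hu⟩ := ih
    obtain ⟨w, hw⟩ := T.sons_ne u
    exact ⟨w, by rw [Function.iterate_succ_apply, hw, hu]⟩

lemma le_trans' {x y z : V} (h1 : T.Le x y) (h2 : T.Le y z) : T.Le x z := by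
  obtain ⟨k, hk⟩ := h1; obtain ⟨l, hl⟩ := h2
  exact ⟨l + k, by rw [Function.iterate_add_apply, hk, hl]⟩

lemma dist_le {x y : V} {k l : ℕ} (h : T.pred^[k] x = T.pred^[l] y) :
    T.dist x y ≤ k + l :=
  Nat.sInf_le ⟨k, l, rfl, h⟩

lemma dist_spec (x y : V) : ∃ k l : ℕ, k + l = T.dist x y ∧ T.pred^[k] x = T.pred^[l] y := by
  obtain ⟨k, l, h⟩ := T.conn x y
  have hne : {n : ℕ | ∃ k l : ℕ, k + l = n ∧ T.pred^[k] x = T.pred^[l] y}.Nonempty :=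
    ⟨k + l, k, l, rfl, h⟩
  exact Nat.sInf_mem hne

end Basics

section Mst

variable {m : V → ℝ≥0∞}

lemma mst_eq_indicator (m : V → ℝ≥0∞) (A : Set V) : mst m A = ∑' x : V, A.indicator m x :=
  tsum_subtype A m

lemma mst_mono {A B : Set V} (h : A ⊆ B) : mst m A ≤ mst m B := by
  rw [mst_eq_indicator, mst_eq_indicator]
  exact ENNReal.tsum_le_tsum fun x => Set.indicator_le_indicator_of_subset h (fun _ => zero_le) x

lemma mst_coe (s : Finset V) : mst m ↑s = ∑ x ∈ s, m x := by
  rw [mst]; exact Finset.tsum_subtype s m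

lemma mst_le_sum {A : Set V} {s : Finset V} (h : A ⊆ ↑s) :
    mst m A ≤ ∑ x ∈ s, m x := by
  rw [← mst_coe]; exact mst_mono h

lemma sum_le_mst {A : Set V} {s : Finset V} (h : ↑s ⊆ A) :
    ∑ x ∈ s, m x ≤ mst m A := by
  rw [← mst_coe]; exact mst_mono h

end Mst
section Flow

variable [DecidableEq V]

/-- depth-`n` descendants of `z` -/
noncomputable def desc (T : Tree V) [DecidableEq V] : ℕ → V → Finset V
  | 0, z => {z}
  | n + 1, z => (desc T n z).biUnion T.sons

variable (T : Tree V)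

lemma mem_desc {n : ℕ} {z y : V} : y ∈ desc T n z ↔ T.pred^[n] y = z := by
  induction n generalizing y with
  | zero => simp [desc]
  | succ n ih =>
    simp only [desc, Finset.mem_biUnion]
    constructor
    · rintro ⟨w, hw, hy⟩
      rw [Function.iterate_succ_apply, (mem_sons T).1 hy, ih.1 hw]
    · intro h
      exact ⟨T.pred y, ih.2 (by rw [← Function.iterate_succ_apply, h]),
        (mem_sons T).2 rfl⟩

variable {m : V → ℝ≥0∞}

lemma sum_desc (hm : IsFlow T m) (n : ℕ) (z : V) : ∑ y ∈ desc T n z, m y = m z := by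
  induction n with
  | zero => simp [desc]
  | succ n ih =>
    rw [desc, Finset.sum_biUnion, ← ih]
    · exact Finset.sum_congr rfl fun w _ => (hm.flow w).symm
    · intro a _ b _ hab
      simp only [Finset.disjoint_left]
      intro y hy hy'
      exact hab (((mem_sons T).1 hy).symm.trans ((mem_sons T).1 hy'))

lemma le_pred (hm : IsFlow T m) (x : V) : m x ≤ m (T.pred x) := by
  rw [hm.flow (T.pred x)]
  exact Finset.single_le_sum (fun y _ => zero_le) ((mem_sons T).2 rfl)

lemma le_iter (hm : IsFlow T m) {k l : ℕ} (h : k ≤ l) (x : V) : m (T.pred^[k] x) ≤ m (T.pred^[l] x) := by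
  induction l with
  | zero => simp_all
  | succ n ih =>
    rcases Nat.lt_or_ge k (n+1) with h' | h'
    · calc m (T.pred^[k] x) ≤ m (T.pred^[n] x) := ih (Nat.lt_succ_iff.1 h')
        _ ≤ m (T.pred^[n+1] x) := by
            rw [Function.iterate_succ_apply']; exact le_pred T hm _
    · have : k = n + 1 := le_antisymm h h'
      subst this; rfl

/-- Upper bound for the measure of a ball. -/
lemma mst_ball_le (hm : IsFlow T m) (x : V) (r : ℕ) :
    mst m (T.ball x r) ≤ (2 * r + 1 : ℕ) * m (T.pred^[r] x) := by
  set z := T.pred^[r] x with hz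
  set G : Finset V := (Finset.range (2 * r + 1)).biUnion (fun j => desc T j z) with hG
  have hsub : T.ball x r ⊆ ↑G := by
    intro y hy
    have hd : T.dist x y ≤ r := hy
    obtain ⟨k, l, hkl, he⟩ := dist_spec T x y
    have hk : k ≤ r := le_trans (le_trans (Nat.le_add_right _ _) hkl.le) hd
    have hl : l ≤ r := le_trans (le_trans (Nat.le_add_left _ _) hkl.le) hd
    have : T.pred^[r - k + l] y = z := by
      rw [hz, Function.iterate_add_apply, ← he, ← Function.iterate_add_apply,
        Nat.sub_add_cancel hk]
    simp only [hG, Finset.coe_biUnion, Set.mem_iUnion, Finset.mem_coe, Finset.mem_range]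
    exact ⟨r - k + l, by omega, (mem_desc T).2 this⟩
  calc mst m (T.ball x r) ≤ ∑ y ∈ G, m y := mst_le_sum hsub
    _ = ∑ j ∈ Finset.range (2 * r + 1), ∑ y ∈ desc T j z, m y := by
        rw [hG, Finset.sum_biUnion]
        intro a ha b hb hab
        simp only [Finset.disjoint_left]
        intro y hy hy'
        exact hab (iter_inj T (((mem_desc T).1 hy).trans ((mem_desc T).1 hy').symm))
    _ = ∑ j ∈ Finset.range (2 * r + 1), m z :=
        Finset.sum_congr rfl fun j _ => sum_desc T hm j z
    _ = (2 * r + 1 : ℕ) * m z := by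
        rw [Finset.sum_const, Finset.card_range, nsmul_eq_mul]

/-- Lower bound for the measure of a ball: it contains the ancestors. -/
lemma sum_anc_le_mst (x : V) (r : ℕ) :
    ∑ k ∈ Finset.range (r + 1), m (T.pred^[k] x) ≤ mst m (T.ball x r) := by
  have hinj : Set.InjOn (fun k => T.pred^[k] x) ↑(Finset.range (r + 1)) :=
    fun a _ b _ h => iter_inj T h
  rw [← Finset.sum_image (fun a ha b hb h => hinj ha hb h)]
  apply sum_le_mst
  intro y hy
  simp only [Finset.coe_image, Set.mem_image, Finset.mem_coe, Finset.mem_range] at hy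
  obtain ⟨k, hk, rfl⟩ := hy
  show T.dist x _ ≤ r
  calc T.dist x (T.pred^[k] x) ≤ k + 0 := dist_le T rfl
    _ ≤ r := by omega

end Flow
section Lists

variable (T : Tree V)

lemma desc_chain : ∀ (t : List V) (a b : V), (a :: b :: t).Nodup →
    List.Chain' T.Adj (a :: b :: t) → T.pred b = a →
    ∀ x ∈ a :: b :: t, T.Le ((b :: t).getLast (by simp)) x := by
  intro t
  induction t with
  | nil =>
    intro a b _ _ hba x hx
    simp only [List.mem_cons, List.not_mem_nil, or_false] at hx
    rcases hx with rfl | rfl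
    · exact ⟨1, by simpa using hba⟩
    · exact ⟨0, rfl⟩
  | cons c t' ih =>
    intro a b hnd hch hba x hx
    have hbc : T.Adj b c := by
      exact (List.isChain_cons_cons.1 (List.isChain_cons_cons.1 hch).2).1
    have hanotin : a ∉ b :: c :: t' := by
      simp only [List.nodup_cons] at hnd; exact hnd.1
    have hcb : T.pred c = b := by
      rcases hbc with h | h
      · exfalso; apply hanotin; rw [← hba, h]; simp
      · exact h
    have hnd' : (b :: c :: t').Nodup := (List.nodup_cons.1 hnd).2
    have hch' : List.Chain' T.Adj (b :: c :: t') := hch.tail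
    have H := ih b c hnd' hch' hcb
    have hgl : (b :: c :: t').getLast (by simp) = (c :: t').getLast (by simp) :=
      List.getLast_cons _
    simp only [List.mem_cons] at hx
    rcases hx with rfl | hx
    · obtain ⟨k, hk⟩ := H b (by simp)
      refine ⟨k + 1, ?_⟩
      rw [Function.iterate_succ_apply']
      show T.pred (T.pred^[k] ((c :: t').getLast (by simp))) = x
      rw [hk, hba]
    · exact H x (by simpa using hx)

lemma chain_endpoints : ∀ (l : List V) (h : l ≠ []), l.Nodup → l.Chain' T.Adj →
    ∀ x ∈ l, T.Le (l.head h) x ∨ T.Le (l.getLast h) x := by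
  intro l
  induction l with
  | nil => intro h; exact absurd rfl h
  | cons a t ih =>
    intro _ hnd hch x hx
    match t, hx with
    | [], hx =>
      simp only [List.mem_cons, List.not_mem_nil, or_false] at hx
      subst hx
      exact Or.inl ⟨0, rfl⟩
    | b :: t', hx =>
      have hab : T.Adj a b := by
        exact (List.isChain_cons_cons.1 hch).1
      rcases hab with h1 | h1
      · -- ascending first step : pred a = b
        simp only [List.mem_cons] at hx
        rcases hx with rfl | hx
        · exact Or.inl ⟨0, rfl⟩
        · have := ih (by simp) (List.nodup_cons.1 hnd).2 hch.tail x (by simpa using hx)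
          rcases this with h2 | h2
          · exact Or.inl (le_trans' T ⟨1, by simpa using h1⟩ h2)
          · exact Or.inr h2
      · -- descending : pred b = a
        exact Or.inr (desc_chain T t' a b hnd hch h1 x hx)

lemma card_filter_range (P : ℕ → Prop) [DecidablePred P] (h : ℕ) :
    ((Finset.range h).filter P).card = (List.range h).countP (fun k => decide (P k)) := by
  induction h with
  | zero => simp
  | succ n ih =>
    rw [Finset.range_add_one, Finset.filter_insert, List.range_succ, List.countP_append]
    by_cases hP : P n
    · rw [if_pos hP, Finset.card_insert_of_notMem (by simp)]
      simp [hP, ih]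
    · rw [if_neg hP]
      simp [hP, ih]

lemma finite_of_finsets {α : Type*} {S : Set α} {B : ℕ}
    (h : ∀ t : Finset α, ↑t ⊆ S → t.card ≤ B) :
    ∃ hf : S.Finite, hf.toFinset.card ≤ B := by
  have hfin : S.Finite := by
    by_contra hinf
    obtain ⟨t, hts, htc⟩ := Set.Infinite.exists_subset_card_eq hinf (B + 1)
    have := h t hts
    omega
  exact ⟨hfin, by simpa using h hfin.toFinset (by simp)⟩

end Lists
section Count

variable (T : Tree V)

lemma anc_geodesic (x : V) (h : ℕ) :
    IsGeodesic T ((List.range h).map (fun k => T.pred^[k] x)) := by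
  constructor
  · refine List.Nodup.map_on ?_ List.nodup_range
    intro a _ b _ hab
    exact iter_inj T hab
  · show List.IsChain T.Adj _
    rw [List.isChain_map]
    cases h with
    | zero => simp
    | succ n =>
      rw [List.isChain_range_succ]
      intro i _
      exact Or.inl (by rw [Function.iterate_succ_apply'])

lemma countB {M : ℕ} (hM : ∀ l : List V, IsGeodesic T l → branchCount T l ≤ M)
    (x : V) (h : ℕ) :
    ((Finset.range h).filter (fun k => 2 ≤ T.deg (T.pred^[k] x))).card ≤ M := by
  have := hM _ (anc_geodesic T x h)
  rw [branchCount, List.countP_map] at this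
  rw [card_filter_range]
  exact le_trans (le_of_eq rfl) this

/-- If every initial segment of the branch-ancestor set of `v` has at most `B`
elements, the whole set is finite with at most `B` elements. -/
lemma branch_anc_finite (v : V) {B : ℕ}
    (hb : ∀ h, ((Finset.range h).filter (fun k => 2 ≤ T.deg (T.pred^[k] v))).card ≤ B) :
    ∃ hf : {k : ℕ | 2 ≤ T.deg (T.pred^[k] v)}.Finite, hf.toFinset.card ≤ B := by
  apply finite_of_finsets
  intro t ht
  classical
  have hsub : t ⊆ (Finset.range (t.sup id + 1)).filter (fun k => 2 ≤ T.deg (T.pred^[k] v)) := by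
    intro k hk
    rw [Finset.mem_filter, Finset.mem_range]
    exact ⟨Nat.lt_succ_of_le (Finset.le_sup (f := id) hk), ht hk⟩
  exact le_trans (Finset.card_le_card hsub) (hb _)

end Count
section Forward

variable [DecidableEq V] (T : Tree V) {m : V → ℝ≥0∞} {c : ℝ≥0∞}

/-- `m(p(y)) ≤ 5c·m(y)` for a doubling flow measure. -/
lemma fwd_parent (hm : IsFlow T m) (hc1 : 1 ≤ c)
    (hD : ∀ (r : ℕ) (x : V), 0 < r → mst m (T.ball x (2 * r)) ≤ c * mst m (T.ball x r))
    (y : V) : m (T.pred y) ≤ 5 * c * m y := by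
  obtain ⟨w, hw⟩ := exists_desc T 2 y
  have h4 := hD 2 w (by norm_num)
  have hlow : m (T.pred y) ≤ mst m (T.ball w (2 * 2)) := by
    have h3 : T.pred^[3] w = T.pred y := by
      rw [show (3 : ℕ) = 2 + 1 from rfl, Function.iterate_succ_apply', hw]
    calc m (T.pred y) = m (T.pred^[3] w) := by rw [h3]
      _ ≤ ∑ k ∈ Finset.range (2 * 2 + 1), m (T.pred^[k] w) :=
          Finset.single_le_sum (f := fun k => m (T.pred^[k] w)) (fun i _ => zero_le)
            (show (3:ℕ) ∈ Finset.range (2 * 2 + 1) by norm_num)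
      _ ≤ mst m (T.ball w (2 * 2)) := sum_anc_le_mst T w (2 * 2)
  have hup : mst m (T.ball w 2) ≤ (2 * 2 + 1 : ℕ) * m y := by
    have := mst_ball_le T hm w 2
    rwa [hw] at this
  calc m (T.pred y) ≤ c * mst m (T.ball w 2) := le_trans hlow h4
    _ ≤ c * ((2 * 2 + 1 : ℕ) * m y) := by exact mul_le_mul_right hup c
    _ = 5 * c * m y := by push_cast; ring

variable {T}

lemma K_ne_zero (hc1 : 1 ≤ c) : (5 * c : ℝ≥0∞) ≠ 0 :=
  mul_ne_zero (by norm_num) (lt_of_lt_of_le zero_lt_one hc1).ne'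

lemma K_ne_top (hctop : c ≠ ⊤) : (5 * c : ℝ≥0∞) ≠ ⊤ :=
  ENNReal.mul_ne_top (by norm_num) hctop

section K

variable (hm : IsFlow T m) (hc1 : 1 ≤ c) (hctop : c ≠ ⊤)
  (hD : ∀ (r : ℕ) (x : V), 0 < r → mst m (T.ball x (2 * r)) ≤ c * mst m (T.ball x r))

include hm hc1 hctop hD

lemma fwd_son_lb {z y : V} (hy : y ∈ T.sons z) : (5 * c)⁻¹ * m z ≤ m y := by
  have h1 : m z ≤ 5 * c * m y := by
    have := fwd_parent T hm hc1 hD y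
    rwa [(mem_sons T).1 hy] at this
  calc (5 * c)⁻¹ * m z ≤ (5 * c)⁻¹ * (5 * c * m y) := mul_le_mul_right h1 _
    _ = m y := by
      rw [← mul_assoc, ENNReal.inv_mul_cancel (K_ne_zero hc1) (K_ne_top hctop), one_mul]

lemma fwd_deg (z : V) : (T.deg z : ℝ≥0∞) ≤ 5 * c := by
  have hsum : (T.deg z : ℝ≥0∞) * ((5 * c)⁻¹ * m z) ≤ m z := by
    calc (T.deg z : ℝ≥0∞) * ((5 * c)⁻¹ * m z)
        = (T.sons z).card • ((5 * c)⁻¹ * m z) := by rw [nsmul_eq_mul]; rfl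
      _ ≤ ∑ y ∈ T.sons z, m y :=
          Finset.card_nsmul_le_sum _ _ _ (fun y hy => fwd_son_lb hm hc1 hctop hD hy)
      _ = m z := (hm.flow z).symm
  have hz0 := (hm.pos z).ne'
  have hztop := (hm.fin z).ne
  have h2 : (T.deg z : ℝ≥0∞) * (5 * c)⁻¹ ≤ 1 := by
    rw [← ENNReal.mul_le_mul_iff_left hz0 hztop, one_mul, mul_assoc]
    exact hsum
  calc (T.deg z : ℝ≥0∞) = (T.deg z : ℝ≥0∞) * (5 * c)⁻¹ * (5 * c) := by
        rw [mul_assoc, ENNReal.inv_mul_cancel (K_ne_zero hc1) (K_ne_top hctop), mul_one]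
    _ ≤ 1 * (5 * c) := mul_le_mul_left h2 _
    _ = 5 * c := one_mul _

lemma fwd_branch_step {z y : V} (hz : 2 ≤ T.deg z) (hy : y ∈ T.sons z) :
    m y + (5 * c)⁻¹ * m z ≤ m z := by
  obtain ⟨w, hw, hwy⟩ := Finset.exists_mem_ne (by exact lt_of_lt_of_le one_lt_two hz) y
  calc m y + (5 * c)⁻¹ * m z ≤ m y + m w :=
        add_le_add_right (fwd_son_lb hm hc1 hctop hD hw) _
    _ = ∑ v ∈ ({y, w} : Finset V), m v := (Finset.sum_pair (Ne.symm hwy)).symm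
    _ ≤ ∑ v ∈ T.sons z, m v := by
        apply Finset.sum_le_sum_of_subset
        intro v hv
        rcases Finset.mem_insert.1 hv with rfl | hv
        · exact hy
        · rwa [Finset.mem_singleton.1 hv]
    _ = m z := (hm.flow z).symm

open Finset in
/-- growth along ancestors: each branch ancestor adds `(5c)⁻¹ m x`. -/
lemma fwd_growth (x : V) (h : ℕ) :
    m x + (((range (h + 1)).filter
        (fun k => 1 ≤ k ∧ 2 ≤ T.deg (T.pred^[k] x))).card : ℝ≥0∞)
      * (5 * c)⁻¹ * m x ≤ m (T.pred^[h] x) := by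
  classical
  induction h with
  | zero =>
    have h0 : ((range (0 + 1)).filter (fun k => 1 ≤ k ∧ 2 ≤ T.deg (T.pred^[k] x))) = ∅ := by
      apply Finset.filter_eq_empty_iff.2
      intro k hk
      simp only [Finset.mem_range] at hk
      omega
    rw [h0]
    simp
  | succ n ih =>
    have hsplit : (range (n + 2)).filter (fun k => 1 ≤ k ∧ 2 ≤ T.deg (T.pred^[k] x))
        = if 1 ≤ n + 1 ∧ 2 ≤ T.deg (T.pred^[n+1] x)
          then insert (n + 1) ((range (n + 1)).filter (fun k => 1 ≤ k ∧ 2 ≤ T.deg (T.pred^[k] x)))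
          else (range (n + 1)).filter (fun k => 1 ≤ k ∧ 2 ≤ T.deg (T.pred^[k] x)) := by
      rw [Finset.range_add_one, Finset.filter_insert]
    have hmem : T.pred^[n] x ∈ T.sons (T.pred^[n+1] x) :=
      (mem_sons T).2 (Function.iterate_succ_apply' T.pred n x).symm
    have hmono : m (T.pred^[n] x) ≤ m (T.pred^[n+1] x) := le_iter T hm (Nat.le_succ n) x
    have hmx : m x ≤ m (T.pred^[n+1] x) := le_iter T hm (Nat.zero_le _) x
    by_cases hb : 2 ≤ T.deg (T.pred^[n+1] x)
    · rw [hsplit, if_pos ⟨by omega, hb⟩,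
        Finset.card_insert_of_notMem (by simp)]
      have hstep := fwd_branch_step hm hc1 hctop hD hb hmem
      push_cast
      calc m x + ((((range (n + 1)).filter
              (fun k => 1 ≤ k ∧ 2 ≤ T.deg (T.pred^[k] x))).card : ℝ≥0∞) + 1)
            * (5 * c)⁻¹ * m x
          = (m x + (((range (n + 1)).filter
              (fun k => 1 ≤ k ∧ 2 ≤ T.deg (T.pred^[k] x))).card : ℝ≥0∞)
            * (5 * c)⁻¹ * m x) + (5 * c)⁻¹ * m x := by ring
        _ ≤ m (T.pred^[n] x) + (5 * c)⁻¹ * m x := add_le_add_left ih _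
        _ ≤ m (T.pred^[n] x) + (5 * c)⁻¹ * m (T.pred^[n+1] x) :=
            add_le_add_right (mul_le_mul_right hmx _) _
        _ ≤ m (T.pred^[n+1] x) := hstep
    · rw [hsplit, if_neg (by tauto)]
      exact le_trans ih hmono

end K

end Forward
section Forward2

variable [DecidableEq V] {T : Tree V} {m : V → ℝ≥0∞} {c : ℝ≥0∞}

open Finset

variable (hm : IsFlow T m) (hc1 : 1 ≤ c) (hctop : c ≠ ⊤)
  (hD : ∀ (r : ℕ) (x : V), 0 < r → mst m (T.ball x (2 * r)) ≤ c * mst m (T.ball x r))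

include hm hc1 hctop hD

lemma fwd_nb_le (x : V) (h : ℕ) :
    (((range (h + 1)).filter
        (fun k => 1 ≤ k ∧ 2 ≤ T.deg (T.pred^[k] x))).card : ℝ≥0∞) ≤ 20 * c ^ 2 := by
  set n : ℕ := ((range (h + 1)).filter
      (fun k => 1 ≤ k ∧ 2 ≤ T.deg (T.pred^[k] x))).card with hn
  obtain ⟨u, hu⟩ := exists_desc T (2 * h + 2) x
  set t : ℕ := 2 * h + 2 with ht
  have hDu := hD t u (by omega)
  have hup : mst m (T.ball u t) ≤ ((2 * t + 1 : ℕ) : ℝ≥0∞) * m x := by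
    have := mst_ball_le T hm u t
    rwa [hu] at this
  have hph : T.pred^[t + h] u = T.pred^[h] x := by
    rw [Nat.add_comm, Function.iterate_add_apply, hu]
  have hlow : ((h + 3 : ℕ) : ℝ≥0∞) * m (T.pred^[h] x) ≤ mst m (T.ball u (2 * t)) := by
    have hcard : (Finset.Icc (t + h) (2 * t)).card = h + 3 := by
      rw [Nat.card_Icc]; omega
    have h1 : ((h + 3 : ℕ) : ℝ≥0∞) * m (T.pred^[h] x)
        ≤ ∑ k ∈ Finset.Icc (t + h) (2 * t), m (T.pred^[k] u) := by
      rw [← hph, ← hcard, ← nsmul_eq_mul]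
      exact Finset.card_nsmul_le_sum _ _ _
        (fun k hk => le_iter T hm (Finset.mem_Icc.1 hk).1 u)
    have h2 : ∑ k ∈ Finset.Icc (t + h) (2 * t), m (T.pred^[k] u)
        ≤ ∑ k ∈ range (2 * t + 1), m (T.pred^[k] u) := by
      apply Finset.sum_le_sum_of_subset
      intro k hk
      rw [Finset.mem_range]
      have := (Finset.mem_Icc.1 hk).2
      omega
    exact le_trans h1 (le_trans h2 (sum_anc_le_mst T u (2 * t)))
  have hgrow : (n : ℝ≥0∞) * (5 * c)⁻¹ * m x ≤ m (T.pred^[h] x) :=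
    le_trans le_add_self (fwd_growth hm hc1 hctop hD x h)
  have hmain : ((h + 3 : ℕ) : ℝ≥0∞) * ((n : ℝ≥0∞) * (5 * c)⁻¹ * m x)
      ≤ (4 * c) * (((h + 3 : ℕ) : ℝ≥0∞) * m x) := by
    calc ((h + 3 : ℕ) : ℝ≥0∞) * ((n : ℝ≥0∞) * (5 * c)⁻¹ * m x)
        ≤ ((h + 3 : ℕ) : ℝ≥0∞) * m (T.pred^[h] x) := mul_le_mul_right hgrow _
      _ ≤ mst m (T.ball u (2 * t)) := hlow
      _ ≤ c * mst m (T.ball u t) := hDu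
      _ ≤ c * (((2 * t + 1 : ℕ) : ℝ≥0∞) * m x) := mul_le_mul_right hup _
      _ ≤ (4 * c) * (((h + 3 : ℕ) : ℝ≥0∞) * m x) := by
          rw [← mul_assoc, mul_comm (4 : ℝ≥0∞) c, mul_assoc, mul_assoc]
          apply mul_le_mul_right
          rw [← mul_assoc]
          apply mul_le_mul_left
          have : ((2 * t + 1 : ℕ) : ℝ≥0∞) ≤ 4 * ((h + 3 : ℕ) : ℝ≥0∞) := by
            rw [ht]
            push_cast
            rw [show ((4:ℝ≥0∞)) * ((h : ℝ≥0∞) + 3) = 4 * (h:ℝ≥0∞) + 12 by ring]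
            calc (2 : ℝ≥0∞) * (2 * (h:ℝ≥0∞) + 2) + 1 = 4 * (h:ℝ≥0∞) + 5 := by ring
              _ ≤ 4 * (h:ℝ≥0∞) + 12 := by
                  exact add_le_add_right (by norm_num) _
          exact this
  -- cancel m x and (h+3)
  have hx0 := (hm.pos x).ne'
  have hxt := (hm.fin x).ne
  have h3ne : ((h + 3 : ℕ) : ℝ≥0∞) ≠ 0 := by
    simp
  have h3top : ((h + 3 : ℕ) : ℝ≥0∞) ≠ ⊤ := ENNReal.natCast_ne_top _
  have hc0 : (n : ℝ≥0∞) * (5 * c)⁻¹ ≤ 4 * c := by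
    have h1 : ((n : ℝ≥0∞) * (5 * c)⁻¹) * (((h + 3 : ℕ) : ℝ≥0∞) * m x)
        ≤ (4 * c) * (((h + 3 : ℕ) : ℝ≥0∞) * m x) := by
      calc ((n : ℝ≥0∞) * (5 * c)⁻¹) * (((h + 3 : ℕ) : ℝ≥0∞) * m x)
          = ((h + 3 : ℕ) : ℝ≥0∞) * ((n : ℝ≥0∞) * (5 * c)⁻¹ * m x) := by ring
        _ ≤ (4 * c) * (((h + 3 : ℕ) : ℝ≥0∞) * m x) := hmain
    have hne : ((h + 3 : ℕ) : ℝ≥0∞) * m x ≠ 0 := by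
      exact mul_ne_zero h3ne hx0
    have hnt : ((h + 3 : ℕ) : ℝ≥0∞) * m x ≠ ⊤ := ENNReal.mul_ne_top h3top hxt
    exact (ENNReal.mul_le_mul_iff_left hne hnt).1 h1
  calc (n : ℝ≥0∞) = (n : ℝ≥0∞) * (5 * c)⁻¹ * (5 * c) := by
        rw [mul_assoc, ENNReal.inv_mul_cancel (K_ne_zero hc1) (K_ne_top hctop), mul_one]
    _ ≤ (4 * c) * (5 * c) := mul_le_mul_left hc0 _
    _ = 20 * c ^ 2 := by ring

lemma fwd_all (x : V) (h : ℕ) :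
    (((range h).filter (fun k => 2 ≤ T.deg (T.pred^[k] x))).card : ℝ≥0∞)
      ≤ 20 * c ^ 2 + 1 := by
  have hsub : (range h).filter (fun k => 2 ≤ T.deg (T.pred^[k] x))
      ⊆ insert 0 ((range (h + 1)).filter (fun k => 1 ≤ k ∧ 2 ≤ T.deg (T.pred^[k] x))) := by
    intro k hk
    rw [Finset.mem_filter, Finset.mem_range] at hk
    rcases Nat.eq_zero_or_pos k with rfl | hk0
    · exact Finset.mem_insert_self _ _
    · apply Finset.mem_insert_of_mem
      rw [Finset.mem_filter, Finset.mem_range]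
      exact ⟨by omega, hk0, hk.2⟩
  calc (((range h).filter (fun k => 2 ≤ T.deg (T.pred^[k] x))).card : ℝ≥0∞)
      ≤ ((insert 0 ((range (h + 1)).filter
          (fun k => 1 ≤ k ∧ 2 ≤ T.deg (T.pred^[k] x)))).card : ℝ≥0∞) := by
        exact_mod_cast Nat.cast_le.2 (Finset.card_le_card hsub)
    _ ≤ (((range (h + 1)).filter
          (fun k => 1 ≤ k ∧ 2 ≤ T.deg (T.pred^[k] x))).card : ℝ≥0∞) + 1 := by
        have := Finset.card_insert_le 0 ((range (h + 1)).filter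
          (fun k => 1 ≤ k ∧ 2 ≤ T.deg (T.pred^[k] x)))
        exact_mod_cast Nat.cast_le.2 this
    _ ≤ 20 * c ^ 2 + 1 := add_le_add_left (fwd_nb_le hm hc1 hctop hD x h) 1

end Forward2
section ForwardMain

open Finset

lemma nat_le_ceil_of_cast_le {n : ℕ} {R : ℝ} (h : (n : ℝ≥0∞) ≤ ENNReal.ofReal R) :
    n ≤ ⌈R⌉₊ := by
  have h2 : (n : ℝ≥0∞) ≤ (⌈R⌉₊ : ℝ≥0∞) := by
    calc (n : ℝ≥0∞) ≤ ENNReal.ofReal R := h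
      _ ≤ ENNReal.ofReal ((⌈R⌉₊ : ℝ)) := ENNReal.ofReal_le_ofReal (Nat.le_ceil R)
      _ = (⌈R⌉₊ : ℝ≥0∞) := ENNReal.ofReal_natCast _
  exact_mod_cast h2

lemma forward_dir {T : Tree V} {m : V → ℝ≥0∞} (hm : IsFlow T m) (hdb : Doubling T m) :
    (∃ q : ℕ, ∀ x : V, T.deg x ≤ q) ∧
      ∃ M : ℕ, ∀ l : List V, IsGeodesic T l → branchCount T l ≤ M := by
  classical
  obtain ⟨C, hC, hD⟩ := hdb
  set c : ℝ≥0∞ := ENNReal.ofReal C with hc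
  have hc1 : 1 ≤ c := by
    rw [hc, ENNReal.one_le_ofReal]; exact hC.le
  have hctop : c ≠ ⊤ := ENNReal.ofReal_ne_top
  have hD' : ∀ (r : ℕ) (x : V), 0 < r →
      mst m (T.ball x (2 * r)) ≤ c * mst m (T.ball x r) := fun r x hr => hD r x hr
  constructor
  · -- bounded degree
    refine ⟨⌈5 * C⌉₊, fun z => ?_⟩
    have h1 : (T.deg z : ℝ≥0∞) ≤ 5 * c := fwd_deg hm hc1 hctop hD' z
    have h2 : (5 * c : ℝ≥0∞) = ENNReal.ofReal (5 * C) := by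
      rw [hc, ENNReal.ofReal_mul (by norm_num : (0:ℝ) ≤ 5), ENNReal.ofReal_ofNat]
    exact nat_le_ceil_of_cast_le (h2 ▸ h1)
  · -- bounded branch number
    set NB : ℕ := ⌈20 * C ^ 2 + 1⌉₊ with hNB
    have hCpos : (0:ℝ) ≤ C := le_trans zero_le_one hC.le
    have heq : (20 * c ^ 2 + 1 : ℝ≥0∞) = ENNReal.ofReal (20 * C ^ 2 + 1) := by
      rw [hc, ENNReal.ofReal_add (by positivity) (by norm_num),
        ENNReal.ofReal_mul (by norm_num : (0:ℝ) ≤ 20),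
        ENNReal.ofReal_pow hCpos, ENNReal.ofReal_ofNat, ENNReal.ofReal_one]
    have hball : ∀ (v : V) (h : ℕ),
        (((range h).filter (fun k => 2 ≤ T.deg (T.pred^[k] v))).card) ≤ NB := by
      intro v h
      have h1 := fwd_all hm hc1 hctop hD' v h
      exact nat_le_ceil_of_cast_le (heq ▸ h1)
    -- finite branch-ancestor finsets
    have hBv : ∀ v : V, ∃ B : Finset V, B.card ≤ NB ∧
        ∀ x : V, T.Le v x → 2 ≤ T.deg x → x ∈ B := by
      intro v
      obtain ⟨hf, hfc⟩ := branch_anc_finite T v (hball v)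
      refine ⟨hf.toFinset.image (fun k => T.pred^[k] v), ?_, ?_⟩
      · exact le_trans (Finset.card_image_le) hfc
      · rintro x ⟨k, rfl⟩ hdeg
        exact Finset.mem_image.2 ⟨k, by simpa using hdeg, rfl⟩
    refine ⟨2 * NB, fun l hl => ?_⟩
    rcases l with _ | ⟨a, t⟩
    · simp [branchCount]
    · set l : List V := a :: t with hldef
      have hne : l ≠ [] := by simp [hldef]
      obtain ⟨Ba, hBa, hBam⟩ := hBv (l.head hne)
      obtain ⟨Bb, hBb, hBbm⟩ := hBv (l.getLast hne)
      have hend := chain_endpoints T l hne hl.1 hl.2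
      have hcount : branchCount T l = (l.filter (fun y => decide (2 ≤ T.deg y))).length := by
        rw [branchCount, List.countP_eq_length_filter]
      have hndf : (l.filter (fun y => decide (2 ≤ T.deg y))).Nodup := hl.1.filter _
      have hsub : (l.filter (fun y => decide (2 ≤ T.deg y))).toFinset ⊆ Ba ∪ Bb := by
        intro x hx
        rw [List.mem_toFinset, List.mem_filter] at hx
        have hdeg : 2 ≤ T.deg x := of_decide_eq_true hx.2
        rcases hend x hx.1 with h | h
        · exact Finset.mem_union_left _ (hBam x h hdeg)
        · exact Finset.mem_union_right _ (hBbm x h hdeg)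
      calc branchCount T l = (l.filter (fun y => decide (2 ≤ T.deg y))).toFinset.card := by
            rw [hcount, List.toFinset_card_of_nodup hndf]
        _ ≤ (Ba ∪ Bb).card := Finset.card_le_card hsub
        _ ≤ Ba.card + Bb.card := Finset.card_union_le _ _
        _ ≤ 2 * NB := by omega

end ForwardMain
section Backward

open Finset

/-- The canonical flow measure: product of reciprocals of degrees of strict ancestors. -/
noncomputable def flowm (T : Tree V) (x : V) : ℝ≥0∞ :=
  ∏ᶠ k : ℕ, (T.deg (T.pred^[k+1] x) : ℝ≥0∞)⁻¹

variable {T : Tree V} {M Q : ℕ}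
  (hM : ∀ l : List V, IsGeodesic T l → branchCount T l ≤ M)

include hM

lemma flowm_spec (x : V) : ∃ N₀ : ℕ, ∀ N, N₀ ≤ N →
    flowm T x = ∏ k ∈ range N, (T.deg (T.pred^[k+1] x) : ℝ≥0∞)⁻¹ := by
  classical
  have hset : {k : ℕ | 2 ≤ T.deg (T.pred^[k+1] x)}
      = {k : ℕ | 2 ≤ T.deg (T.pred^[k] (T.pred x))} := by
    ext k
    simp [Function.iterate_succ_apply]
  obtain ⟨hf, hfc⟩ := branch_anc_finite T (T.pred x) (countB T hM (T.pred x))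
  refine ⟨hf.toFinset.sup id + 1, fun N hN => ?_⟩
  apply finprod_eq_prod_of_mulSupport_subset
  intro k hk
  have hk2 : 2 ≤ T.deg (T.pred^[k+1] x) := by
    rcases Nat.lt_or_ge (T.deg (T.pred^[k+1] x)) 2 with h | h
    · exfalso
      have h1 : 1 ≤ T.deg (T.pred^[k+1] x) := deg_pos T _
      have : T.deg (T.pred^[k+1] x) = 1 := by omega
      apply hk
      show ((T.deg (T.pred^[k+1] x) : ℝ≥0∞))⁻¹ = 1
      rw [this]
      norm_num
    · exact h
  have hmem : k ∈ hf.toFinset := by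
    rw [Set.Finite.mem_toFinset]
    show 2 ≤ T.deg (T.pred^[k] (T.pred x))
    rwa [← Function.iterate_succ_apply]
  have : k ≤ hf.toFinset.sup id := Finset.le_sup (f := id) hmem
  simp only [Finset.coe_range, Set.mem_Iio]
  omega

lemma flowm_son {x y : V} (hy : T.pred y = x) :
    flowm T y = (T.deg x : ℝ≥0∞)⁻¹ * flowm T x := by
  obtain ⟨Ny, hNy⟩ := flowm_spec hM y
  obtain ⟨Nx, hNx⟩ := flowm_spec hM x
  set N := max Ny Nx with hN
  have h1 : flowm T y = ∏ k ∈ range (N + 1), (T.deg (T.pred^[k] x) : ℝ≥0∞)⁻¹ := by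
    rw [hNy (N + 1) (by omega)]
    apply Finset.prod_congr rfl
    intro k _
    rw [Function.iterate_succ_apply, hy]
  rw [h1, Finset.prod_range_succ']
  simp only [Function.iterate_zero_apply]
  rw [← hNx N (by omega), mul_comm]

lemma flowm_pos (x : V) : 0 < flowm T x := by
  obtain ⟨N, hN⟩ := flowm_spec hM x
  rw [hN N le_rfl, pos_iff_ne_zero]
  rw [Finset.prod_ne_zero_iff]
  intro k _
  exact ENNReal.inv_ne_zero.2 (ENNReal.natCast_ne_top _)

lemma flowm_le_one (x : V) : flowm T x ≤ 1 := by
  obtain ⟨N, hN⟩ := flowm_spec hM x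
  rw [hN N le_rfl]
  apply Finset.prod_le_one (fun k _ => zero_le)
  intro k _
  rw [ENNReal.inv_le_one]
  exact_mod_cast deg_pos T _

lemma flowm_isFlow : IsFlow T (flowm T) := by
  constructor
  · exact flowm_pos hM
  · exact fun x => lt_of_le_of_lt (flowm_le_one hM x) (by norm_num)
  · intro x
    have hconst : ∀ y ∈ T.sons x, flowm T y = (T.deg x : ℝ≥0∞)⁻¹ * flowm T x :=
      fun y hy => flowm_son hM ((mem_sons T).1 hy)
    rw [Finset.sum_congr rfl hconst, Finset.sum_const, nsmul_eq_mul]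
    show flowm T x = (T.deg x : ℝ≥0∞) * ((T.deg x : ℝ≥0∞)⁻¹ * flowm T x)
    rw [← mul_assoc, ENNReal.mul_inv_cancel
      (by exact_mod_cast (deg_pos T x).ne' : (T.deg x : ℝ≥0∞) ≠ 0)
      (ENNReal.natCast_ne_top _), one_mul]

lemma flowm_lb (hQ : ∀ x : V, T.deg x ≤ Q) (hQ1 : 1 ≤ Q) (x : V) :
    ((Q : ℝ≥0∞) ^ M)⁻¹ ≤ flowm T x := by
  classical
  obtain ⟨N, hN⟩ := flowm_spec hM x
  rw [hN N le_rfl]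
  have hstep : ∀ k ∈ range N,
      (if 2 ≤ T.deg (T.pred^[k+1] x) then (Q : ℝ≥0∞)⁻¹ else 1)
        ≤ (T.deg (T.pred^[k+1] x) : ℝ≥0∞)⁻¹ := by
    intro k _
    by_cases h : 2 ≤ T.deg (T.pred^[k+1] x)
    · rw [if_pos h]
      apply ENNReal.inv_le_inv.2
      exact_mod_cast hQ _
    · rw [if_neg h]
      have h1 : T.deg (T.pred^[k+1] x) = 1 := by
        have := deg_pos T (T.pred^[k+1] x); omega
      rw [h1]
      norm_num
  have hcard : ((range N).filter (fun k => 2 ≤ T.deg (T.pred^[k+1] x))).card ≤ M := by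
    have heqf : (range N).filter (fun k => 2 ≤ T.deg (T.pred^[k+1] x))
        = (range N).filter (fun k => 2 ≤ T.deg (T.pred^[k] (T.pred x))) := by
      apply Finset.filter_congr
      intro k _
      rw [Function.iterate_succ_apply]
    rw [heqf]
    exact countB T hM (T.pred x) N
  calc ((Q : ℝ≥0∞) ^ M)⁻¹
      ≤ ((Q : ℝ≥0∞) ^ (((range N).filter (fun k => 2 ≤ T.deg (T.pred^[k+1] x))).card))⁻¹ := by
        apply ENNReal.inv_le_inv.2
        exact pow_le_pow_right' (by exact_mod_cast hQ1) hcard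
    _ = ∏ k ∈ range N, (if 2 ≤ T.deg (T.pred^[k+1] x) then (Q : ℝ≥0∞)⁻¹ else 1) := by
        rw [Finset.prod_ite, Finset.prod_const, Finset.prod_const_one, mul_one,
          ← ENNReal.inv_pow]
    _ ≤ ∏ k ∈ range N, (T.deg (T.pred^[k+1] x) : ℝ≥0∞)⁻¹ :=
        Finset.prod_le_prod' hstep

end Backward
section BackwardMain

open Finset

lemma backward_dir [Nonempty V] {T : Tree V} {Q M : ℕ} (hQ : ∀ x : V, T.deg x ≤ Q)
    (hM : ∀ l : List V, IsGeodesic T l → branchCount T l ≤ M) :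
    ∃ m : V → ℝ≥0∞, IsFlow T m ∧ Doubling T m := by
  classical
  have hQ1 : 1 ≤ Q := le_trans (deg_pos T (Classical.arbitrary V)) (hQ _)
  have hQM1 : 1 ≤ Q ^ M := Nat.one_le_pow _ _ (by omega)
  have hflow : IsFlow T (flowm T) := flowm_isFlow hM
  have hQMne : ((Q : ℝ≥0∞) ^ M) ≠ 0 := by
    apply pow_ne_zero
    have : Q ≠ 0 := by omega
    exact_mod_cast this
  have hQMtop : ((Q : ℝ≥0∞) ^ M) ≠ ⊤ := ENNReal.pow_ne_top (ENNReal.natCast_ne_top _)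
  refine ⟨flowm T, hflow, ((4 * Q ^ M : ℕ) : ℝ), ?_, ?_⟩
  · have h4 : (4 : ℕ) ≤ 4 * Q ^ M := by nlinarith
    have : (1 : ℕ) < 4 * Q ^ M := by omega
    exact_mod_cast this
  · intro r x hr
    have hup : mst (flowm T) (T.ball x (2 * r))
        ≤ ((4 * r + 1 : ℕ) : ℝ≥0∞) := by
      calc mst (flowm T) (T.ball x (2 * r))
          ≤ ((2 * (2 * r) + 1 : ℕ) : ℝ≥0∞) * flowm T (T.pred^[2 * r] x) :=
            mst_ball_le T hflow x (2 * r)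
        _ ≤ ((2 * (2 * r) + 1 : ℕ) : ℝ≥0∞) * 1 := mul_le_mul_right (flowm_le_one hM _) _
        _ = ((4 * r + 1 : ℕ) : ℝ≥0∞) := by rw [mul_one]; congr 1; omega
    have hlowv : ((r + 1 : ℕ) : ℝ≥0∞) * ((Q : ℝ≥0∞) ^ M)⁻¹ ≤ mst (flowm T) (T.ball x r) := by
      calc ((r + 1 : ℕ) : ℝ≥0∞) * ((Q : ℝ≥0∞) ^ M)⁻¹
          = (range (r + 1)).card • ((Q : ℝ≥0∞) ^ M)⁻¹ := by
            rw [Finset.card_range, nsmul_eq_mul]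
        _ ≤ ∑ k ∈ range (r + 1), flowm T (T.pred^[k] x) :=
            Finset.card_nsmul_le_sum _ _ _ (fun k _ => flowm_lb hM hQ hQ1 _)
        _ ≤ mst (flowm T) (T.ball x r) := sum_anc_le_mst T x r
    have hmid : ((4 * r + 1 : ℕ) : ℝ≥0∞)
        ≤ ((4 * Q ^ M : ℕ) : ℝ≥0∞) * (((r + 1 : ℕ) : ℝ≥0∞) * ((Q : ℝ≥0∞) ^ M)⁻¹) := by
      have hrw : ((4 * Q ^ M : ℕ) : ℝ≥0∞) * (((r + 1 : ℕ) : ℝ≥0∞) * ((Q : ℝ≥0∞) ^ M)⁻¹)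
          = ((4 * (r + 1) : ℕ) : ℝ≥0∞) * ((Q : ℝ≥0∞) ^ M * ((Q : ℝ≥0∞) ^ M)⁻¹) := by
        push_cast
        ring
      rw [hrw, ENNReal.mul_inv_cancel hQMne hQMtop, mul_one]
      exact_mod_cast Nat.cast_le.2 (by omega : 4 * r + 1 ≤ 4 * (r + 1))
    calc mst (flowm T) (T.ball x (2 * r)) ≤ ((4 * r + 1 : ℕ) : ℝ≥0∞) := hup
      _ ≤ ((4 * Q ^ M : ℕ) : ℝ≥0∞) * (((r + 1 : ℕ) : ℝ≥0∞) * ((Q : ℝ≥0∞) ^ M)⁻¹) := hmid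
      _ ≤ ((4 * Q ^ M : ℕ) : ℝ≥0∞) * mst (flowm T) (T.ball x r) :=
          mul_le_mul_right hlowv _
      _ = ENNReal.ofReal ((4 * Q ^ M : ℕ) : ℝ) * mst (flowm T) (T.ball x r) := by
          rw [ENNReal.ofReal_natCast]

end BackwardMain

/-- a tree rooted at infinity admits a doubling flow measure iff it
has uniformly bounded degree and a uniform bound on the number of branch
vertices along geodesics. -/
theorem statement3 {V : Type u} [Countable V] [Infinite V] (T : Tree V) :
    (∃ m : V → ℝ≥0∞, IsFlow T m ∧ Doubling T m) ↔
      ((∃ q : ℕ, ∀ x : V, T.deg x ≤ q) ∧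
        ∃ M : ℕ, ∀ l : List V, IsGeodesic T l → branchCount T l ≤ M) := by
  classical
  constructor
  · rintro ⟨m, hm, hdb⟩
    exact forward_dir hm hdb
  · rintro ⟨⟨Q, hQ⟩, M, hM⟩
    exact backward_dir hQ hM

end FlowPaper
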